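/- Let n be a positive natural number, λ₀ > 0, let K : ℝ → Mat(n×n, ℝ) be such that for all t ≥ 0 and all v ∈ ℝⁿ, vᵀK(t)v ≥ λ₀‖v‖², and let L : ℝ → Mat(n×n, ℝ) be differentiable satisfying L̇(t) = −L(t)K(t) − K(t)L(t) for all t ≥ 0, with K(t) symmetric for all t. Then ‖L(t)‖_F ≤ e^{−2λ₀ t}‖L(0)‖_F for all t ≥ 0, so L(t) → 0. -/

import Mathlib

/-!
The squared Frobenius norm `f = tr (Lᵀ L)` satisfies `f' = 2 tr (Lᵀ L') = -2 tr (L K Lᵀ) - 2 tr (Lᵀ K L)`.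
Both traces are sums of values of the quadratic form of `K`, on the rows and on the columns of `L`
respectively, so each is at least `λ₀ f`. Hence `f' ≤ -4 λ₀ f`, and Grönwall's inequality gives
`f t ≤ e^{-4 λ₀ t} f 0`; taking square roots gives the claim.
-/

open Matrix

attribute [local instance] Matrix.frobeniusNormedAddCommGroup Matrix.frobeniusNormedSpace

open Real Filter Topology

theorem le_mul_exp_of_hasDerivAt_le_mul {f f' : ℝ → ℝ} {c : ℝ}
    (hf : ∀ t, 0 ≤ t → HasDerivAt f (f' t) t) (bound : ∀ t, 0 ≤ t → f' t ≤ c * f t)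
    {t : ℝ} (ht : 0 ≤ t) : f t ≤ f 0 * exp (c * t) := by
  simpa [gronwallBound_ε0] using le_gronwallBound_of_liminf_deriv_right_le (ε := 0) (b := t)
    (fun s hs => (hf s hs.1).continuousAt.continuousWithinAt)
    (fun s hs _ hr => (hf s hs.1).hasDerivWithinAt.liminf_right_slope_le hr) le_rfl
    (fun s hs => by simpa using bound s hs.1) t ⟨ht, le_rfl⟩

theorem sqrt_le_exp_mul_sqrt {a b c t : ℝ} (h : a ≤ b * exp (2 * c * t)) :
    √a ≤ exp (c * t) * √b := by
  have hsq : exp (2 * c * t) = exp (c * t) ^ 2 := by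
    rw [sq, ← exp_add]; ring_nf
  calc √a ≤ √(b * exp (c * t) ^ 2) := sqrt_le_sqrt (hsq ▸ h)
    _ = exp (c * t) * √b := by rw [sqrt_mul' _ (sq_nonneg _), sqrt_sq (exp_nonneg _), mul_comm]

namespace Matrix

variable {m n : Type*} [Fintype m] [Fintype n]

theorem trace_transpose_mul_eq_sum {R : Type*} [NonUnitalCommSemiring R] (A B : Matrix m n R) :
    trace (Aᵀ * B) = ∑ i, ∑ j, A i j * B i j := by
  simp only [trace, diag, mul_apply, transpose_apply]
  exact Finset.sum_comm

theorem frobenius_norm_eq_sqrt_trace (A : Matrix m n ℝ) : ‖A‖ = √(trace (Aᵀ * A)) := by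
  simp only [frobenius_norm_def, trace_transpose_mul_eq_sum, norm_eq_abs, ← sq,
    sqrt_eq_rpow]
  norm_num

theorem mul_trace_transpose_mul_self_le {K : Matrix n n ℝ} {lam : ℝ}
    (hK : ∀ v : n → ℝ, lam * (v ⬝ᵥ v) ≤ v ⬝ᵥ K *ᵥ v) (A : Matrix n m ℝ) :
    lam * trace (Aᵀ * A) ≤ trace (Aᵀ * K * A) := by
  have hdiag : ∀ j, (Aᵀ * K * A) j j = Aᵀ j ⬝ᵥ K *ᵥ Aᵀ j := by
    intro j
    simp only [mul_apply, dotProduct, mulVec, transpose_apply, Finset.mul_sum, Finset.sum_mul]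
    rw [Finset.sum_comm]
    exact Finset.sum_congr rfl fun _ _ => Finset.sum_congr rfl fun _ _ => by ring
  have hsq : ∀ j, (Aᵀ * A) j j = Aᵀ j ⬝ᵥ Aᵀ j := fun j => rfl
  simp only [trace, diag, hdiag, hsq, Finset.mul_sum]
  exact Finset.sum_le_sum fun j _ => hK _

theorem trace_transpose_mul_lyapunov_le {K : Matrix n n ℝ} {lam : ℝ}
    (hK : ∀ v : n → ℝ, lam * (v ⬝ᵥ v) ≤ v ⬝ᵥ K *ᵥ v) (A : Matrix n n ℝ) :
    trace (Aᵀ * (-(A * K) - K * A)) ≤ -(2 * lam) * trace (Aᵀ * A) := by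
  have hrows := mul_trace_transpose_mul_self_le hK Aᵀ
  have hcols := mul_trace_transpose_mul_self_le hK A
  rw [transpose_transpose, trace_mul_comm A Aᵀ] at hrows
  have hKA : trace (Aᵀ * (A * K)) = trace (A * K * Aᵀ) := trace_mul_comm _ _
  rw [Matrix.mul_sub, Matrix.mul_neg, trace_sub, trace_neg, hKA, ← Matrix.mul_assoc]
  linarith

end Matrix

theorem HasDerivAt.trace_transpose_mul_self {m n : Type*} [Fintype m] [Fintype n]
    {A : ℝ → Matrix m n ℝ} {A' : Matrix m n ℝ} {t : ℝ} (hA : HasDerivAt A A' t) :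
    HasDerivAt (fun s => trace ((A s)ᵀ * A s)) (2 * trace ((A t)ᵀ * A')) t := by
  simp only [trace_transpose_mul_eq_sum, Finset.mul_sum]
  refine HasDerivAt.fun_sum fun i _ => HasDerivAt.fun_sum fun j _ => ?_
  have hentry : HasDerivAt (fun s => A s i j) (A' i j) t :=
    (entryLinearMap ℝ ℝ i j).toContinuousLinearMap.hasFDerivAt.comp_hasDerivAt t hA
  exact (hentry.mul hentry).congr_deriv (by ring)

theorem commutator_decay_general
    (n : ℕ) (lam : ℝ) (hlam : 0 < lam)
    (K L : ℝ → Matrix (Fin n) (Fin n) ℝ)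
    (hK : ∀ t : ℝ, 0 ≤ t → ∀ v : Fin n → ℝ, lam * (v ⬝ᵥ v) ≤ v ⬝ᵥ (K t) *ᵥ v)
    (hL : ∀ t : ℝ, 0 ≤ t → HasDerivAt L (-(L t * K t) - K t * L t) t) :
    (∀ t : ℝ, 0 ≤ t →
        Real.sqrt (Matrix.trace ((L t)ᵀ * L t)) ≤
          Real.exp (-2 * lam * t) * Real.sqrt (Matrix.trace ((L 0)ᵀ * L 0)))
      ∧ Filter.Tendsto L Filter.atTop (nhds 0) := by
  have hdecay : ∀ t, 0 ≤ t → √(trace ((L t)ᵀ * L t)) ≤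
      exp (-2 * lam * t) * √(trace ((L 0)ᵀ * L 0)) := fun t ht =>
    sqrt_le_exp_mul_sqrt <| le_mul_exp_of_hasDerivAt_le_mul
      (fun s hs => (hL s hs).trace_transpose_mul_self)
      (fun s hs => by linarith [trace_transpose_mul_lyapunov_le (hK s hs) (L s)]) ht
  refine ⟨hdecay, squeeze_zero_norm' (a := fun t => exp (-2 * lam * t) * √(trace ((L 0)ᵀ * L 0)))
    ?_ ?_⟩
  · filter_upwards [eventually_ge_atTop 0] with t ht
    rw [frobenius_norm_eq_sqrt_trace]
    exact hdecay t ht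
  · simpa using (tendsto_exp_atBot.comp (tendsto_id.const_mul_atTop_of_neg
      (by linarith : -2 * lam < 0))).mul_const (√(trace ((L 0)ᵀ * L 0)))

theorem commutator_decay
    (n : ℕ) (hn : 0 < n) (lam : ℝ) (hlam : 0 < lam)
    (K L : ℝ → Matrix (Fin n) (Fin n) ℝ)
    (hKsymm : ∀ t : ℝ, (K t).IsSymm)
    (hK : ∀ t : ℝ, 0 ≤ t → ∀ v : Fin n → ℝ, lam * (v ⬝ᵥ v) ≤ v ⬝ᵥ (K t) *ᵥ v)
    (hL : ∀ t : ℝ, 0 ≤ t → HasDerivAt L (-(L t * K t) - K t * L t) t) :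
    (∀ t : ℝ, 0 ≤ t →
        Real.sqrt (Matrix.trace ((L t)ᵀ * L t)) ≤
          Real.exp (-2 * lam * t) * Real.sqrt (Matrix.trace ((L 0)ᵀ * L 0)))
      ∧ Filter.Tendsto L Filter.atTop (nhds 0) :=
  commutator_decay_general n lam hlam K L hK hL
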